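/- For N angles θ_1,…,θ_N and x, φ ∈ ℝ, the modulus of the artifact term satisfies |(1/N) Σ_{n=1}^N e^{i x cos(θ_n - φ)} - J_0(x)| ≤ 1 + |J_0(x)|, and if the θ_n are equispaced (θ_n = 2π(n-1)/N) it is bounded by Σ_{m ≠ 0, N | m} |J_m(x)|. -/

import Mathlib

/-!
The function `t ↦ exp (i x sin t)` is smooth and `2π`-periodic, and its Fourier coefficients
on `[-π, π]` are the Bessel functions `J_m(x)`. Two integrations by parts give
`|J_m(x)| = O(1/m²)`, so its Fourier series (the Jacobi–Anger expansion) converges absolutely.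
Averaging it over `N` equispaced points kills every mode `m` with `N ∤ m`, by orthogonality of
the `N`-th roots of unity; what remains is `∑_{N ∣ m} J_m(x) e^{ims}`, and removing the term
`m = 0`, which is `J_0(x)`, gives the second bound. The first bound is the triangle inequality,
since an average of unit complex numbers has modulus at most `1`.
-/

open Complex Real Filter

noncomputable def besselJ (m : ℤ) (x : ℝ) : ℂ :=
  (1 / (2 * Real.pi)) * ∫ τ in (-Real.pi)..Real.pi,
    Complex.exp (Complex.I * (((x * Real.sin τ - m * τ : ℝ) : ℂ)))

open Set

theorem Function.Periodic.deriv {𝕜 F : Type*} [NontriviallyNormedField 𝕜] [NormedAddCommGroup F]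
    [NormedSpace 𝕜 F] {f : 𝕜 → F} {T : 𝕜} (hf : Function.Periodic f T) :
    Function.Periodic (deriv f) T := fun x => by
  rw [← deriv_comp_add_const, funext hf]

section FourierCoeffOn

variable {a b : ℝ} (hab : a < b)

theorem norm_fourierCoeffOn_le {E : Type*} [NormedAddCommGroup E] [NormedSpace ℂ E]
    {f : ℝ → E} {C : ℝ} (hC : ∀ x ∈ uIcc a b, ‖f x‖ ≤ C) (n : ℤ) :
    ‖fourierCoeffOn hab f n‖ ≤ C := by
  have hba : 0 < b - a := sub_pos.mpr hab
  have hint : ‖∫ x in a..b, fourier (-n) (x : AddCircle (b - a)) • f x‖ ≤ C * (b - a) := by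
    rw [← abs_of_pos hba]
    refine intervalIntegral.norm_integral_le_of_norm_le_const fun x hx => ?_
    rw [norm_smul, fourier_apply, Circle.norm_coe, one_mul]
    exact hC x (uIoc_subset_uIcc hx)
  calc ‖fourierCoeffOn hab f n‖
      = 1 / (b - a) * ‖∫ x in a..b, fourier (-n) (x : AddCircle (b - a)) • f x‖ := by
        rw [fourierCoeffOn_eq_integral, norm_smul, Real.norm_of_nonneg (by positivity)]
    _ ≤ 1 / (b - a) * (C * (b - a)) := by gcongr
    _ = C := by field_simp

theorem fourierCoeffOn_eq_mul_fourierCoeffOn_of_hasDerivAt {f f' : ℝ → ℂ}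
    (hf : ∀ x ∈ uIcc a b, HasDerivAt f (f' x) x)
    (hf' : IntervalIntegrable f' MeasureTheory.volume a b)
    (hfab : f b = f a) {n : ℤ} (hn : n ≠ 0) :
    fourierCoeffOn hab f n = (b - a) / (2 * π * I * n) * fourierCoeffOn hab f' n := by
  rw [fourierCoeffOn_of_hasDerivAt hab hn hf hf', hfab, sub_self, mul_zero, zero_sub]
  have : (π : ℂ) ≠ 0 := ofReal_ne_zero.mpr pi_ne_zero
  field_simp

theorem exists_norm_fourierCoeffOn_le_div_sq {f : ℝ → ℂ} (hf : ContDiff ℝ 2 f)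
    (hper : Function.Periodic f (b - a)) :
    ∃ C, ∀ n : ℤ, n ≠ 0 → ‖fourierCoeffOn hab f n‖ ≤ C / (n : ℝ) ^ 2 := by
  have hd : Differentiable ℝ f := hf.differentiable (by norm_num)
  have hd' : ContDiff ℝ 1 (deriv f) := hf.iterate_deriv' 1 1
  obtain ⟨C, hC⟩ := (isCompact_uIcc (a := a) (b := b)).exists_bound_of_continuousOn
    (hd'.continuous_deriv le_rfl).continuousOn
  refine ⟨((b - a) / (2 * π)) ^ 2 * C, fun n hn => ?_⟩
  have hparts : ∀ g : ℝ → ℂ, Differentiable ℝ g → Continuous (deriv g) → g b = g a →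
      fourierCoeffOn hab g n = (b - a) / (2 * π * I * n) * fourierCoeffOn hab (deriv g) n :=
    fun g hg hg' hgab => fourierCoeffOn_eq_mul_fourierCoeffOn_of_hasDerivAt hab
      (fun x _ => (hg x).hasDerivAt) (hg'.intervalIntegrable a b) hgab hn
  have hfab : ∀ g : ℝ → ℂ, Function.Periodic g (b - a) → g b = g a := fun g hg => by
    simpa using hg a
  rw [hparts f hd (hf.continuous_deriv (by norm_num)) (hfab f hper),
    hparts (deriv f) (hd'.differentiable one_ne_zero) (hd'.continuous_deriv le_rfl)
      (hfab _ hper.deriv), ← mul_assoc, norm_mul]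
  have hfactor : ‖((b : ℂ) - a) / (2 * π * I * n) * ((b - a) / (2 * π * I * n))‖
      = ((b - a) / (2 * π)) ^ 2 / (n : ℝ) ^ 2 := by
    rw [← ofReal_sub, norm_mul, norm_div, norm_mul, norm_mul, norm_mul, norm_I, norm_real,
      norm_real, Real.norm_of_nonneg (sub_pos.mpr hab).le, Real.norm_of_nonneg pi_pos.le,
      norm_intCast, Complex.norm_two]
    field_simp
    rw [sq_abs]
  rw [hfactor, div_mul_eq_mul_div, mul_div_assoc, mul_div_assoc]
  gcongr
  exact norm_fourierCoeffOn_le hab hC n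

theorem summable_norm_fourierCoeffOn_of_contDiff {f : ℝ → ℂ} (hf : ContDiff ℝ 2 f)
    (hper : Function.Periodic f (b - a)) : Summable fun n => ‖fourierCoeffOn hab f n‖ := by
  obtain ⟨C, hC⟩ := exists_norm_fourierCoeffOn_le_div_sq hab hf hper
  refine .of_norm_bounded_eventually
    ((summable_one_div_int_pow.mpr one_lt_two).mul_left C) ?_
  filter_upwards [(finite_singleton (0 : ℤ)).compl_mem_cofinite] with n hn
  rw [norm_norm, mul_one_div]
  exact hC n hn

theorem Function.Periodic.liftIoc_eq_lift {B : Type*} {T : ℝ} [Fact (0 < T)] {f : ℝ → B}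
    (hper : Function.Periodic f T) (a : ℝ) : AddCircle.liftIoc T a f = hper.lift := by
  ext y
  change f (AddCircle.equivIoc T a y) = _
  rw [← hper.lift_coe, AddCircle.coe_equivIoc]

theorem hasSum_fourierCoeffOn_mul_fourier_of_contDiff {f : ℝ → ℂ} (hf : ContDiff ℝ 2 f)
    (hper : Function.Periodic f (b - a)) (t : ℝ) :
    HasSum (fun n => fourierCoeffOn hab f n * fourier n (t : AddCircle (b - a))) (f t) := by
  have : Fact (0 < b - a) := ⟨sub_pos.mpr hab⟩
  let F : C(AddCircle (b - a), ℂ) := ⟨hper.lift, hf.continuous.quotient_liftOn' _⟩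
  have hcoeff : fourierCoeff F = fourierCoeffOn hab f := by
    ext n
    rw [fourierCoeffOn, hper.liftIoc_eq_lift]
    rfl
  have := has_pointwise_sum_fourier_series_of_summable
    (hcoeff ▸ (summable_norm_fourierCoeffOn_of_contDiff hab hf hper).of_norm)
    (t : AddCircle (b - a))
  simp only [hcoeff, smul_eq_mul] at this
  exact this

end FourierCoeffOn

section JacobiAnger

variable (x : ℝ)

theorem contDiff_exp_I_mul_sin :
    ContDiff ℝ 2 fun t : ℝ => exp (I * ((x * Real.sin t : ℝ) : ℂ)) := by
  have h : ContDiff ℝ 2 fun t : ℝ => ((x * Real.sin t : ℝ) : ℂ) :=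
    ofRealCLM.contDiff.comp (contDiff_const.mul Real.contDiff_sin)
  exact (contDiff_const.mul h).cexp

theorem periodic_exp_I_mul_sin :
    Function.Periodic (fun t : ℝ => exp (I * ((x * Real.sin t : ℝ) : ℂ))) (π - -π) := by
  intro t
  simp only [sub_neg_eq_add, ← two_mul, Real.sin_add_two_pi]

theorem fourierCoeffOn_exp_I_mul_sin (m : ℤ) :
    fourierCoeffOn (neg_lt_self pi_pos) (fun t : ℝ => exp (I * ((x * Real.sin t : ℝ) : ℂ))) m =
      besselJ m x := by
  have hπ : (π : ℂ) ≠ 0 := ofReal_ne_zero.mpr pi_ne_zero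
  rw [fourierCoeffOn_eq_integral, besselJ, real_smul, sub_neg_eq_add, ← two_mul]
  push_cast
  congr 1
  refine intervalIntegral.integral_congr fun τ _ => ?_
  simp only [fourier_coe_apply, smul_eq_mul, ← Complex.exp_add]
  congr 1
  push_cast
  field_simp
  ring

theorem summable_norm_besselJ : Summable fun m : ℤ => ‖besselJ m x‖ := by
  simpa only [fourierCoeffOn_exp_I_mul_sin] using
    summable_norm_fourierCoeffOn_of_contDiff (neg_lt_self pi_pos) (contDiff_exp_I_mul_sin x)
      (periodic_exp_I_mul_sin x)

theorem hasSum_besselJ_mul_exp (t : ℝ) :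
    HasSum (fun m : ℤ => besselJ m x * exp (I * m * t))
      (exp (I * ((x * Real.sin t : ℝ) : ℂ))) := by
  have := hasSum_fourierCoeffOn_mul_fourier_of_contDiff (neg_lt_self pi_pos)
    (contDiff_exp_I_mul_sin x) (periodic_exp_I_mul_sin x) t
  convert this using 2 with m
  rw [fourierCoeffOn_exp_I_mul_sin, fourier_coe_apply]
  congr 2
  have hπ : (π : ℂ) ≠ 0 := ofReal_ne_zero.mpr pi_ne_zero
  push_cast
  field_simp
  ring

end JacobiAnger

theorem sum_exp_two_pi_I_mul_div_eq_ite {N : ℕ} (hN : N ≠ 0) (m : ℤ) :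
    ∑ n : Fin N, exp (2 * π * I * m * n / N) = if (N : ℤ) ∣ m then (N : ℂ) else 0 := by
  have hζ := isPrimitiveRoot_exp N hN
  have hpow : ∀ n : ℕ, exp (2 * π * I * m * n / N) = (exp (2 * π * I / N) ^ m) ^ n :=
    fun n => by
      rw [← exp_int_mul, ← Complex.exp_nat_mul]
      ring_nf
  simp only [hpow, Fin.sum_univ_eq_sum_range ((exp (2 * π * I / N) ^ m) ^ ·)]
  split_ifs with hdvd
  · simp [(hζ.zpow_eq_one_iff_dvd m).mpr hdvd]
  · have hN1 : (exp (2 * π * I / N) ^ m) ^ N = 1 := by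
      rw [← zpow_natCast, ← zpow_mul, mul_comm m, zpow_mul, zpow_natCast, hζ.pow_eq_one,
        one_zpow]
    rw [geom_sum_eq (mt (hζ.zpow_eq_one_iff_dvd m).mp hdvd), hN1, sub_self, zero_div]

theorem hasSum_average_equispaced {c : ℤ → ℂ} {f : ℝ → ℂ}
    (hf : ∀ t : ℝ, HasSum (fun m => c m * exp (I * m * t)) (f t)) {N : ℕ} (hN : N ≠ 0) (s : ℝ) :
    HasSum (fun m : ℤ => if (N : ℤ) ∣ m then c m * exp (I * m * s) else 0)
      (1 / (N : ℂ) * ∑ n : Fin N, f (2 * π * n / N + s)) := by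
  have hNC : (N : ℂ) ≠ 0 := Nat.cast_ne_zero.mpr hN
  refine ((hasSum_sum fun (n : Fin N) _ => hf (2 * π * n / N + s)).mul_left
    (1 / (N : ℂ))).congr_fun fun m => ?_
  have hsplit : ∀ n : Fin N, c m * exp (I * m * ((2 * π * n / N + s : ℝ) : ℂ)) =
      c m * exp (I * m * s) * exp (2 * π * I * m * n / N) := fun n => by
    rw [mul_assoc (c m), ← Complex.exp_add]
    push_cast
    ring_nf
  rw [Finset.sum_congr rfl fun n _ => hsplit n, ← Finset.mul_sum,
    sum_exp_two_pi_I_mul_div_eq_ite hN]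
  split_ifs
  · field_simp
  · simp

theorem norm_sub_le_tsum_of_hasSum_ite {c : ℤ → ℂ} (hc : Summable fun m => ‖c m‖) {N : ℤ}
    {s : ℝ} {A : ℂ} (hA : HasSum (fun m => if N ∣ m then c m * exp (I * m * s) else 0) A) :
    ‖A - c 0‖ ≤ ∑' m : {m : ℤ // m ≠ 0 ∧ N ∣ m}, ‖c m‖ := by
  have hsub : HasSum ({m : ℤ | m ≠ 0 ∧ N ∣ m}.indicator fun m => c m * exp (I * m * s))
      (A - c 0) := by
    refine (hA.sub (hasSum_ite_eq 0 (c 0))).congr_fun fun m => ?_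
    by_cases hm : m = 0 <;> by_cases hdvd : N ∣ m <;> simp [hm, hdvd]
  have hunit : ∀ m : ℤ, ‖exp (I * m * s)‖ = 1 := fun m => by
    rw [mul_assoc, ← ofReal_intCast, ← ofReal_mul, norm_exp_I_mul_ofReal]
  refine (hasSum_subtype_iff_indicator.mpr hsub).norm_le_of_bounded
    (hc.subtype {m : ℤ | m ≠ 0 ∧ N ∣ m}).hasSum fun m => ?_
  simp only [Function.comp_apply, norm_mul, hunit, mul_one, le_refl]

theorem norm_average_le_one {N : ℕ} {z : Fin N → ℂ} (hz : ∀ n, ‖z n‖ ≤ 1) :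
    ‖1 / (N : ℂ) * ∑ n, z n‖ ≤ 1 := by
  rcases Nat.eq_zero_or_pos N with rfl | hN
  · simp
  calc ‖1 / (N : ℂ) * ∑ n, z n‖ ≤ 1 / N * ∑ _n : Fin N, (1 : ℝ) := by
        rw [norm_mul, norm_div, norm_one, Complex.norm_natCast]
        gcongr
        exact norm_sum_le_of_le _ fun n _ => hz n
    _ = 1 := by simp [hN.ne']

theorem dsm_artifact_bound (N : ℕ) (hN : 1 ≤ N) (x φ : ℝ) :
    (∀ θ : Fin N → ℝ,
      ‖(1 / (N : ℂ)) * ∑ n : Fin N,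
              Complex.exp (Complex.I * ((x * Real.cos (θ n - φ) : ℝ) : ℂ)) -
            besselJ 0 x‖ ≤ 1 + ‖besselJ 0 x‖) ∧
    ‖(1 / (N : ℂ)) * ∑ n : Fin N,
            Complex.exp (Complex.I *
              ((x * Real.cos (2 * Real.pi * (n : ℝ) / N - φ) : ℝ) : ℂ)) -
          besselJ 0 x‖ ≤
      ∑' m : {m : ℤ // m ≠ 0 ∧ (N : ℤ) ∣ m}, ‖besselJ m x‖ := by
  refine ⟨fun θ => (norm_sub_le _ _).trans ?_, ?_⟩
  · gcongr
    exact norm_average_le_one fun n => norm_exp_I_mul_ofReal _ |>.le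
  · have hcos : ∀ t : ℝ, Real.cos (t - φ) = Real.sin (t + (π / 2 - φ)) := fun t => by
      rw [← Real.sin_add_pi_div_two]
      ring_nf
    simp only [hcos]
    exact norm_sub_le_tsum_of_hasSum_ite (summable_norm_besselJ x)
      (hasSum_average_equispaced (hasSum_besselJ_mul_exp x) (by omega) _)
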